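/- arXiv:cs/0602077 — 2 statements merged into one kernel-verified Lean document; each statement's English description precedes it below -/
import Mathlib

section
/- (Descent) Given a pullback square of V-categories with bottom f : A → C and right leg g : B → C, if f is surjective on objects and satisfies C(c,c') ≤ ⋁_{f(a)=c, f(a')=c'} A(a,a') for all c,c' ∈ C, and the pulled-back map ḡ : A ∧_C B → A is a surjective functional bisimulation, then g is a surjective functional bisimulation. -/
/-- A quantaloid: a (small) locally ordered bicategory whose hom-posets are
complete lattices and whose composition preserves suprema in each variable. -/
structure Quantaloid where
  Obj : Type
  Hom : Obj → Obj → Type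
  [lat : ∀ u v : Obj, CompleteLattice (Hom u v)]
  comp : ∀ {u v w : Obj}, Hom u v → Hom v w → Hom u w
  id : ∀ u : Obj, Hom u u
  comp_assoc : ∀ {u v w x : Obj} (f : Hom u v) (g : Hom v w) (h : Hom w x),
    comp (comp f g) h = comp f (comp g h)
  id_comp : ∀ {u v : Obj} (f : Hom u v), comp (id u) f = f
  comp_id : ∀ {u v : Obj} (f : Hom u v), comp f (id v) = f
  comp_sSup_left : ∀ {u v w : Obj} (S : Set (Hom u v)) (g : Hom v w),
    comp (sSup S) g = sSup ((fun f => comp f g) '' S)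
  comp_sSup_right : ∀ {u v w : Obj} (f : Hom u v) (S : Set (Hom v w)),
    comp f (sSup S) = sSup ((fun g => comp f g) '' S)

attribute [instance] Quantaloid.lat

/-- Transport of homs along equalities of objects. -/
def Quantaloid.cast (V : Quantaloid) {u u' v v' : V.Obj} (hu : u = u') (hv : v = v')
    (f : V.Hom u v) : V.Hom u' v' := hu ▸ hv ▸ f

/-- A `V`-category. -/
structure VCat (V : Quantaloid) where
  Obj : Type
  pt : Obj → V.Obj
  hom : ∀ a b : Obj, V.Hom (pt a) (pt b)
  id_le : ∀ a, V.id (pt a) ≤ hom a a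
  comp_le : ∀ a b c, V.comp (hom a b) (hom b c) ≤ hom a c

/-- A simulation from `A` to `B`. -/
def IsSimulation (V : Quantaloid) (A B : VCat V) (R : A.Obj → B.Obj → Prop) : Prop :=
  (∀ a b, R a b → A.pt a = B.pt b) ∧
  ∀ (a : A.Obj) (b : B.Obj), R a b → ∀ (a' : A.Obj) (h : A.pt a = B.pt b),
    V.cast h rfl (A.hom a a') ≤
      sSup {x : V.Hom (B.pt b) (A.pt a') |
        ∃ (b' : B.Obj) (h' : A.pt a' = B.pt b'), R a' b' ∧ x = V.cast rfl h'.symm (B.hom b b')}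

/-- A bisimulation from `A` to `B`. -/
def IsBisimulation (V : Quantaloid) (A B : VCat V) (R : A.Obj → B.Obj → Prop) : Prop :=
  IsSimulation V A B R ∧ IsSimulation V B A (fun b a => R a b)

/-- Bisimilarity of `V`-categories. -/
def Bisimilar (V : Quantaloid) (A B : VCat V) : Prop :=
  ∃ R, IsBisimulation V A B R ∧ (∀ a, ∃ b, R a b) ∧ (∀ b, ∃ a, R a b)

/-- A `V`-functor. -/
structure VFunctor (V : Quantaloid) (A B : VCat V) where
  toFun : A.Obj → B.Obj
  pt_eq : ∀ a, B.pt (toFun a) = A.pt a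
  map_le : ∀ a a',
    V.cast (pt_eq a).symm (pt_eq a').symm (A.hom a a') ≤ B.hom (toFun a) (toFun a')

/-- A surjective functional bisimulation (an "open" map). -/
def VFunctor.IsSFB {V : Quantaloid} {A B : VCat V} (f : VFunctor V A B) : Prop :=
  Function.Surjective f.toFun ∧
  ∀ (a : A.Obj) (b : B.Obj),
    B.hom (f.toFun a) b =
      sSup {x : V.Hom (B.pt (f.toFun a)) (B.pt b) |
        ∃ (a' : A.Obj) (h : f.toFun a' = b),
          x = V.cast (f.pt_eq a).symm ((f.pt_eq a').symm.trans (congrArg B.pt h)) (A.hom a a')}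

namespace Quantaloid

theorem cast_le_iff (V : Quantaloid) {u u' v v' : V.Obj} (hu : u = u') (hv : v = v')
    (x : V.Hom u v) (y : V.Hom u' v') :
    V.cast hu hv x ≤ y ↔ x ≤ V.cast hu.symm hv.symm y := by
  subst hu; subst hv; exact Iff.rfl

theorem cast_mono (V : Quantaloid) {u u' v v' : V.Obj} (hu : u = u') (hv : v = v')
    {x y : V.Hom u v} (h : x ≤ y) : V.cast hu hv x ≤ V.cast hu hv y := by
  subst hu; subst hv; exact h

theorem cast_cast (V : Quantaloid) {u u' u'' v v' v'' : V.Obj}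
    (hu : u = u') (hv : v = v') (hu' : u' = u'') (hv' : v' = v'') (x : V.Hom u v) :
    V.cast hu' hv' (V.cast hu hv x) = V.cast (hu.trans hu') (hv.trans hv') x := by
  subst hu; subst hv; subst hu'; subst hv'; rfl

theorem cast_sSup (V : Quantaloid) {u u' v v' : V.Obj} (hu : u = u') (hv : v = v')
    (S : Set (V.Hom u v)) :
    V.cast hu hv (sSup S) = sSup (V.cast hu hv '' S) := by
  subst hu; subst hv
  show sSup S = sSup ((fun x => x) '' S)
  rw [Set.image_id']

end Quantaloid

/-- Transporting homs along equalities of objects of a `V`-category. -/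
theorem VCat.hom_cast {V : Quantaloid} (A : VCat V) {a a' b b' : A.Obj}
    (h : a = a') (h' : b = b') :
    A.hom a' b' = V.cast (congrArg A.pt h) (congrArg A.pt h') (A.hom a b) := by
  subst h; subst h'; rfl

/-- descent: in a pullback square with bottom `f : A → C` and
right leg `g : B → C`, if `f` is surjective on objects and satisfies
`C(c,c') ≤ ⋁_{f a = c, f a' = c'} A(a,a')`, and the pulled-back map
`ḡ : A ∧_C B → A` is a surjective functional bisimulation, then so is `g`. -/
theorem descent_axiom (V : Quantaloid) (A B C : VCat V)
    (f : VFunctor V A C) (g : VFunctor V B C)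
    (hfsurj : Function.Surjective f.toFun)
    (hstar : ∀ c c' : C.Obj,
      C.hom c c' ≤
        sSup {x : V.Hom (C.pt c) (C.pt c') |
          ∃ (a a' : A.Obj) (h : f.toFun a = c) (h' : f.toFun a' = c'),
            x = V.cast ((f.pt_eq a).symm.trans (congrArg C.pt h))
                  ((f.pt_eq a').symm.trans (congrArg C.pt h')) (A.hom a a')})
    (P : VCat V)
    (e : P.Obj ≃ {x : A.Obj × B.Obj // A.pt x.1 = B.pt x.2 ∧ f.toFun x.1 = g.toFun x.2})
    (hpt : ∀ p, P.pt p = A.pt (e p).1.1)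
    (hhom : ∀ p q : P.Obj,
      P.hom p q = V.cast (hpt p).symm (hpt q).symm
        (A.hom (e p).1.1 (e q).1.1 ⊓
          V.cast (e p).2.1.symm (e q).2.1.symm (B.hom (e p).1.2 (e q).1.2)))
    (π₁ : VFunctor V P A) (hπ₁ : ∀ p, π₁.toFun p = (e p).1.1)
    (hbar : π₁.IsSFB) :
    g.IsSFB := by
  constructor
  · -- surjectivity of g on objects
    intro c
    obtain ⟨a, ha⟩ := hfsurj c
    obtain ⟨p, hp⟩ := hbar.1 a
    refine ⟨(e p).1.2, ?_⟩
    rw [← (e p).2.2, ← hπ₁ p, hp]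
    exact ha
  · intro b c
    apply le_antisymm
    · -- the hard direction
      refine le_trans (hstar (g.toFun b) c) (sSup_le ?_)
      rintro x ⟨a, a', ha, ha', rfl⟩
      rw [Quantaloid.cast_le_iff]
      have hab : A.pt a = B.pt b :=
        ((f.pt_eq a).symm.trans (congrArg C.pt ha)).trans (g.pt_eq b)
      obtain ⟨p, hep⟩ : ∃ p, e p = ⟨(a, b), hab, ha⟩ :=
        ⟨e.symm _, e.apply_symm_apply _⟩
      have hp1 : (e p).1.1 = a := congrArg (fun z => z.1.1) hep
      have hp2 : (e p).1.2 = b := congrArg (fun z => z.1.2) hep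
      have hπp : π₁.toFun p = a := (hπ₁ p).trans hp1
      have haeq : A.hom a a'
          = V.cast (congrArg A.pt hπp) (congrArg A.pt rfl) (A.hom (π₁.toFun p) a') :=
        A.hom_cast hπp rfl
      rw [haeq, hbar.2 p a', Quantaloid.cast_sSup]
      apply sSup_le
      rintro x ⟨y, ⟨q, hq, rfl⟩, rfl⟩
      rw [Quantaloid.cast_cast, Quantaloid.cast_le_iff, Quantaloid.cast_cast,
        Quantaloid.cast_sSup]
      have hq1 : (e q).1.1 = a' := (hπ₁ q).symm.trans hq
      have hgb' : g.toFun (e q).1.2 = c := by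
        rw [← (e q).2.2, hq1]; exact ha'
      refine le_trans ?_ (le_sSup ⟨_, ⟨(e q).1.2, hgb', rfl⟩, rfl⟩)
      rw [hhom p q]
      refine le_trans (V.cast_mono _ _ inf_le_right) ?_
      simp only [Quantaloid.cast_cast]
      rw [B.hom_cast hp2.symm (rfl : (e q).1.2 = (e q).1.2)]
      simp only [Quantaloid.cast_cast]
      exact le_rfl
    · -- the easy direction
      apply sSup_le
      rintro x ⟨b', hb', rfl⟩
      subst hb'
      exact g.map_le b b'
end

section
/- Let F : V → W be a two-sided enrichment whose components F_{x,y} : V(x_-,y_-) → W(x_+,y_+) all preserve arbitrary suprema (e.g. have right adjoints). Then the change-of-base 2-functor F_@ : V-Cat → W-Cat preserves surjective functional bisimulations: if f : A → B is a surjective functional bisimulation of V-categories then F_@(f) is a surjective functional bisimulation of W-categories. -/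
/-- A two-sided enrichment between quantaloids. -/
structure TwoSidedEnrichment (V W : Quantaloid) where
  Obj : Type
  src : Obj → V.Obj
  tgt : Obj → W.Obj
  map : ∀ x y : Obj, V.Hom (src x) (src y) → W.Hom (tgt x) (tgt y)
  mono : ∀ x y, Monotone (map x y)
  lax_comp : ∀ (x y z : Obj) (f : V.Hom (src x) (src y)) (g : V.Hom (src y) (src z)),
    W.comp (map x y f) (map y z g) ≤ map x z (V.comp f g)
  lax_id : ∀ x, W.id (tgt x) ≤ map x x (V.id (src x))


theorem Quantaloid.cast_cast_s17 (V : Quantaloid) {u u' u'' v v' v'' : V.Obj}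
    (h1 : u = u') (h2 : u' = u'') (k1 : v = v') (k2 : v' = v'') (f : V.Hom u v) :
    V.cast h2 k2 (V.cast h1 k1 f) = V.cast (h1.trans h2) (k1.trans k2) f := by
  subst h1; subst h2; subst k1; subst k2; rfl

theorem Quantaloid.cast_sSup_s17 (V : Quantaloid) {u u' v v' : V.Obj} (h : u = u') (k : v = v')
    (S : Set (V.Hom u v)) : V.cast h k (sSup S) = sSup (V.cast h k '' S) := by
  subst h; subst k
  show sSup S = sSup (Quantaloid.cast V rfl rfl '' S)
  congr 1
  ext w
  constructor
  · intro hw; exact ⟨w, hw, rfl⟩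
  · rintro ⟨v, hv, rfl⟩; exact hv

theorem hom_cast_left (W : Quantaloid) (C : VCat W) {d d' : C.Obj} (e : C.Obj) (hd : d = d') :
    C.hom d e = W.cast (congrArg C.pt hd.symm) rfl (C.hom d' e) := by
  subst hd; rfl

/-- if all components of a two-sided enrichment `F : V → W`
preserve arbitrary suprema, then the change of base `F_@` preserves surjective
functional bisimulations.  The change-of-base `W`-categories `F_@A`, `F_@B` and
the `W`-functor `F_@(f)` are presented by their defining data. -/
theorem change_of_base_preserves_sfb (V W : Quantaloid)
    (F : TwoSidedEnrichment V W)
    (hsup : ∀ (x y : F.Obj) (S : Set (V.Hom (F.src x) (F.src y))),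
      F.map x y (sSup S) = sSup (F.map x y '' S))
    (A B : VCat V) (f : VFunctor V A B) (hf : f.IsSFB)
    (FA FB : VCat W)
    (ηA : ∀ (a : A.Obj) (x : F.Obj), A.pt a = F.src x → FA.Obj)
    (ηB : ∀ (b : B.Obj) (x : F.Obj), B.pt b = F.src x → FB.Obj)
    (hsurjA : ∀ z : FA.Obj, ∃ a x h, z = ηA a x h)
    (hsurjB : ∀ z : FB.Obj, ∃ b x h, z = ηB b x h)
    (hinjA : ∀ a x h a' x' h', ηA a x h = ηA a' x' h' → a = a' ∧ x = x')
    (hinjB : ∀ b x h b' x' h', ηB b x h = ηB b' x' h' → b = b' ∧ x = x')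
    (hptA : ∀ a x h, FA.pt (ηA a x h) = F.tgt x)
    (hptB : ∀ b x h, FB.pt (ηB b x h) = F.tgt x)
    (hhomA : ∀ a x h a' x' h',
      FA.hom (ηA a x h) (ηA a' x' h') =
        W.cast (hptA a x h).symm (hptA a' x' h').symm
          (F.map x x' (V.cast h h' (A.hom a a'))))
    (hhomB : ∀ b x h b' x' h',
      FB.hom (ηB b x h) (ηB b' x' h') =
        W.cast (hptB b x h).symm (hptB b' x' h').symm
          (F.map x x' (V.cast h h' (B.hom b b'))))
    (Ff : VFunctor W FA FB)
    (hFf : ∀ a x h, Ff.toFun (ηA a x h) = ηB (f.toFun a) x ((f.pt_eq a).trans h)) :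
    Ff.IsSFB := by
  constructor
  · -- surjectivity
    intro z
    obtain ⟨b, y, k, rfl⟩ := hsurjB z
    obtain ⟨a, rfl⟩ := hf.1 b
    exact ⟨ηA a y ((f.pt_eq a).symm.trans k), hFf a y ((f.pt_eq a).symm.trans k)⟩
  · intro a0 z
    obtain ⟨a, x, h, rfl⟩ := hsurjA a0
    obtain ⟨b, y, k, rfl⟩ := hsurjB z
    have hx : B.pt (f.toFun a) = F.src x := (f.pt_eq a).trans h
    have q : F.tgt x = FB.pt (Ff.toFun (ηA a x h)) :=
      (hptB (f.toFun a) x hx).symm.trans (congrArg FB.pt (hFf a x h).symm)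
    have r : F.tgt y = FB.pt (ηB b y k) := (hptB b y k).symm
    have hL : FB.hom (Ff.toFun (ηA a x h)) (ηB b y k)
        = sSup (W.cast q r '' (F.map x y ''
            (V.cast hx k '' {v : V.Hom (B.pt (f.toFun a)) (B.pt b) |
              ∃ (a' : A.Obj) (h' : f.toFun a' = b),
                v = V.cast (f.pt_eq a).symm
                  ((f.pt_eq a').symm.trans (congrArg B.pt h')) (A.hom a a')}))) := by
      rw [hom_cast_left W FB (ηB b y k) (hFf a x h), hhomB, Quantaloid.cast_cast_s17,
          hf.2 a b, Quantaloid.cast_sSup_s17, hsup, Quantaloid.cast_sSup_s17]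
    rw [hL]
    apply le_antisymm
    · apply sSup_le
      rintro w ⟨_, ⟨_, ⟨v, hv, rfl⟩, rfl⟩, rfl⟩
      obtain ⟨a', h', rfl⟩ := hv
      subst h'
      have hA' : A.pt a' = F.src y := (f.pt_eq a').symm.trans k
      refine le_sSup ⟨ηA a' y hA', hFf a' y hA', ?_⟩
      rw [hhomA, Quantaloid.cast_cast_s17, Quantaloid.cast_cast_s17]
    · apply sSup_le
      rintro w ⟨z', hEq, rfl⟩
      obtain ⟨a', x', hA', rfl⟩ := hsurjA z'
      obtain ⟨hb, hxy⟩ := hinjB _ _ _ _ _ _ ((hFf a' x' hA').symm.trans hEq)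
      subst hxy
      subst hb
      refine le_sSup ⟨_, ⟨_, ⟨V.cast (f.pt_eq a).symm
        ((f.pt_eq a').symm.trans (congrArg B.pt rfl)) (A.hom a a'), ⟨a', rfl, rfl⟩, rfl⟩,
        rfl⟩, ?_⟩
      rw [hhomA, Quantaloid.cast_cast_s17, Quantaloid.cast_cast_s17]
end
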